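/- Fix n ≥ 1 and let v : {1,…,2n} → {1,2} be the alternating deck v(i) = 1 if i is odd and v(i) = 2 if i is even. Then after a single GSR 2-shuffle of v: (a) the probability of returning to the initial alternating deck is Q_2^v(v) = (2^{n−1} + 2^n)/2^{2n}; and (b) for every deck w : {1,…,2n} → {1,2} with exactly n entries equal to 1 and n equal to 2, the quantity 2^{2n}·Q_2^v(w) belongs to the set {0, 2^{n−1}, 2^n, 2^{n−1} + 2^n}. -/

import Mathlib

/-!
The shuffle driven by `f` moves the card at position `p` of `w` to position `(σ f)⁻¹ p`, the
number of positions `q` whose key `(f q, q)` is lexicographically smaller, so `w ∘ σ f = v`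
says that every `w p` is the parity of that rank. Let `Z` be the number of zeros of `f` and
`y k` the parity of the number of zeros among `f 0, …, f k`. The rank of `p` has the parity of
`y (p - 1)` (or `0` for `p = 0`) when `p ≡ Z`, and of `1 + y p` otherwise. Since `f ↦ y` is a
bijection we may count `y` instead. For each value of `Z mod 2 = y (2n - 1)` the condition fixes
`y` on one parity class of positions and leaves the other free (but for the last position when
`Z` is odd). The fixed values are consistent exactly when `w` alternates on the corresponding
pairs of neighbours, and then they leave `2 ^ n` solutions with `Z` even and `2 ^ (n - 1)` with
`Z` odd. The alternating deck alternates on all pairs.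
-/

def IsStableSort {n a : ℕ} (f : Fin n → Fin a) (σ : Equiv.Perm (Fin n)) : Prop :=
  Monotone (f ∘ σ) ∧ ∀ i j : Fin n, i < j → f (σ i) = f (σ j) → σ i < σ j

open Finset

section StableSort

variable {n a : ℕ} {f : Fin n → Fin a} {σ : Equiv.Perm (Fin n)}

theorem IsStableSort.strictMono_toLex (h : IsStableSort f σ) :
    StrictMono fun i => toLex (f (σ i), σ i) := by
  intro i j hij
  rcases (h.1 hij.le).lt_or_eq with hlt | heq
  · exact Prod.Lex.toLex_lt_toLex.2 (Or.inl hlt)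
  · exact Prod.Lex.toLex_lt_toLex.2 (Or.inr ⟨heq, h.2 i j hij heq⟩)

theorem IsStableSort.val_symm_apply (h : IsStableSort f σ) (p : Fin n) :
    (σ.symm p : ℕ) = #{q | toLex (f q, q) < toLex (f p, p)} := by
  have hkey : ∀ q, toLex (f q, q) < toLex (f p, p) ↔ σ.symm q < σ.symm p := fun q => by
    simpa using h.strictMono_toLex.lt_iff_lt (a := σ.symm q) (b := σ.symm p)
  rw [card_equiv σ.symm (t := {i | i < σ.symm p}) (by simp [hkey]), filter_gt_eq_Iio,
    Fin.card_Iio]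

end StableSort

theorem card_filter_forall_notMem_eq_pow {ι β : Type*} [Fintype ι] [DecidableEq ι]
    [Fintype β] [DecidableEq β] (F : Finset ι) (c : ι → β)
    [DecidablePred fun y : ι → β => ∀ i ∉ F, y i = c i] :
    #{y : ι → β | ∀ i ∉ F, y i = c i} = Fintype.card β ^ #F := by
  have hpi : ({y : ι → β | ∀ i ∉ F, y i = c i} : Finset _) =
      Fintype.piFinset fun i => if i ∈ F then univ else {c i} := by
    ext y
    simp only [mem_filter, mem_univ, true_and, Fintype.mem_piFinset]
    refine forall_congr' fun i => ?_
    split_ifs with hi <;> simp [hi]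
  rw [hpi, Fintype.card_piFinset]
  simp [apply_ite, prod_ite_mem, prod_const]

theorem card_filter_val_mod_two_eq (n : ℕ) {r : ℕ} (hr : r < 2) :
    #{p : Fin (2 * n) | (p : ℕ) % 2 = r} = n := by
  refine (card_nbij' (t := (univ : Finset (Fin n))) (fun p : Fin (2 * n) => ⟨p / 2, by omega⟩)
    (fun i : Fin n => ⟨2 * i + r, by omega⟩) ?_ ?_ ?_ ?_).trans (card_fin n) <;>
    intro x hx <;>
    simp only [coe_filter, coe_univ, mem_univ, Set.mem_univ, true_and, Set.mem_ofPred_eq,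
      Fin.ext_iff] at hx ⊢ <;>
    omega

namespace BinaryDeck

section RunningParity

variable {N : ℕ} (f : Fin N → Fin 2)

def zeroCount (m : ℕ) : ℕ := #{q : Fin N | (q : ℕ) < m ∧ f q = 0}

theorem zeroCount_zero : zeroCount f 0 = 0 := by simp [zeroCount]

theorem zeroCount_succ (p : Fin N) :
    zeroCount f (p + 1) = zeroCount f p + if f p = 0 then 1 else 0 := by
  have hsplit : filter (fun q : Fin N => (q : ℕ) < p + 1 ∧ f q = 0) univ =
      filter (fun q : Fin N => (q : ℕ) < p ∧ f q = 0) univ ∪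
        filter (fun q => q = p ∧ f q = 0) univ := by
    ext q
    simp only [mem_filter, mem_univ, true_and, mem_union, Nat.lt_succ_iff_lt_or_eq,
      or_and_right, Fin.val_inj]
  rw [zeroCount, zeroCount, hsplit, card_union_of_disjoint]
  · split_ifs with hp
    · refine congrArg _ (card_eq_one.2 ⟨p, ?_⟩)
      ext q
      simp only [mem_filter, mem_univ, true_and, mem_singleton]
      exact ⟨And.left, fun hq => ⟨hq, hq ▸ hp⟩⟩
    · simp [hp]
  · exact disjoint_filter.2 fun q _ h1 h2 => h1.1.ne (congrArg Fin.val h2.1)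

theorem zeroCount_add_card_lt_and_eq_one (p : Fin N) :
    zeroCount f p + #{q | q < p ∧ f q = 1} = p := by
  have h := card_filter_add_card_filter_not (s := Iio p) (fun q => f q = 0)
  rw [Fin.card_Iio] at h
  have hzero : zeroCount f p = #{q ∈ Iio p | f q = 0} := by
    rw [zeroCount]; congr 1; ext q; simp
  have hone : #{q | q < p ∧ f q = 1} = #{q ∈ Iio p | ¬f q = 0} := by
    congr 1; ext q
    simp only [mem_filter, mem_univ, true_and, mem_Iio]
    exact and_congr_right fun _ => by omega
  omega

theorem card_toLex_lt (p : Fin N) :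
    #{q | toLex (f q, q) < toLex (f p, p)} =
      if f p = 0 then zeroCount f p else zeroCount f N + #{q | q < p ∧ f q = 1} := by
  split_ifs with hp
  · congr 1; ext q; simp [Prod.Lex.toLex_lt_toLex, hp, and_comm]
  · rw [zeroCount, ← card_union_of_disjoint]
    · congr 1; ext q
      simp only [Prod.Lex.toLex_lt_toLex, mem_filter, mem_univ, true_and, mem_union,
        Fin.is_lt]
      omega
    · exact disjoint_filter.2 fun q _ h1 h2 => by omega

theorem card_toLex_lt_mod_two (p : Fin N) :
    #{q | toLex (f q, q) < toLex (f p, p)} % 2 =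
      if (p : ℕ) % 2 = zeroCount f N % 2 then zeroCount f p % 2
      else (zeroCount f (p + 1) + 1) % 2 := by
  have hsucc := zeroCount_succ f p
  have hsplit := zeroCount_add_card_lt_and_eq_one f p
  rw [card_toLex_lt]
  split_ifs at hsucc ⊢ <;> omega

def runningParity (k : Fin N) : Fin 2 := Fin.ofNat 2 (zeroCount f (k + 1))

def prevOrZero (y : Fin N → Fin 2) (p : Fin N) : Fin 2 :=
  if h : (p : ℕ) = 0 then 0 else y ⟨p - 1, by omega⟩

theorem prevOrZero_of_val_eq_zero {y : Fin N → Fin 2} {p : Fin N} (hp : (p : ℕ) = 0) :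
    prevOrZero y p = 0 :=
  dif_pos hp

theorem prevOrZero_of_val_eq_succ {y : Fin N → Fin 2} {p q : Fin N} (hq : (q : ℕ) = p + 1) :
    prevOrZero y q = y p := by
  rw [prevOrZero, dif_neg (by omega)]
  congr
  omega

theorem val_prevOrZero_runningParity (p : Fin N) :
    (prevOrZero (runningParity f) p : ℕ) = zeroCount f p % 2 := by
  by_cases hp : (p : ℕ) = 0
  · simp [prevOrZero_of_val_eq_zero hp, hp, zeroCount_zero]
  · rw [prevOrZero_of_val_eq_succ (p := ⟨p - 1, by omega⟩) (by simp only; omega),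
      runningParity, Fin.val_ofNat]
    congr 2
    simp only
    omega

theorem runningParity_injective : Function.Injective (runningParity (N := N)) := by
  intro f g h
  funext p
  have hf := zeroCount_succ f p
  have hg := zeroCount_succ g p
  have hcur := congrArg Fin.val (congrFun h p)
  have hprev := congrArg (fun y => (prevOrZero y p : ℕ)) h
  simp only [runningParity, Fin.val_ofNat, val_prevOrZero_runningParity] at hcur hprev
  split_ifs at hf hg <;> omega

end RunningParity

def Matches {N : ℕ} (w y : Fin N → Fin 2) (ε : Fin 2) : Prop :=
  ∀ p : Fin N, w p = if (p : ℕ) % 2 = ε then prevOrZero y p else 1 + y p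

instance {N : ℕ} (w y : Fin N → Fin 2) (ε : Fin 2) : Decidable (Matches w y ε) :=
  inferInstanceAs (Decidable (∀ _, _))

theorem comp_stableSort_eq_iff_matches {N : ℕ} (hN : 0 < N) {f : Fin N → Fin 2}
    {σ : Equiv.Perm (Fin N)} (hσ : IsStableSort f σ) {v : Fin N → Fin 2}
    (hv : ∀ p : Fin N, v p = if (p : ℕ) % 2 = 0 then 0 else 1) (w : Fin N → Fin 2) :
    w ∘ σ = v ↔ Matches w (runningParity f) (runningParity f ⟨N - 1, by omega⟩) := by
  have hlast : (runningParity f ⟨N - 1, by omega⟩ : ℕ) = zeroCount f N % 2 := by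
    simp only [runningParity, Fin.val_ofNat, Nat.sub_add_cancel hN]
  have hlabel : ∀ p, v (σ.symm p) = if (p : ℕ) % 2 = runningParity f ⟨N - 1, by omega⟩
      then prevOrZero (runningParity f) p else 1 + runningParity f p := by
    intro p
    have hrank := card_toLex_lt_mod_two f p
    have hprev := val_prevOrZero_runningParity f p
    have hcur : (runningParity f p : ℕ) = zeroCount f (p + 1) % 2 := Fin.val_ofNat _ _
    rw [← hσ.val_symm_apply] at hrank
    rw [hv, Fin.ext_iff]
    split_ifs at hrank ⊢ <;> simp only [Fin.val_add, Fin.val_zero, Fin.val_one] <;> omega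
  rw [Matches, funext_iff, ← σ.symm.forall_congr_right]
  simp [hlabel]

/-- For even `N`: the decks reachable from the alternating deck by a shuffle that cuts it into
two packets of even size. -/
def IsEvenCutRiffle {N : ℕ} (w : Fin N → Fin 2) : Prop :=
  (∀ p : Fin N, (p : ℕ) = 0 → w p = 0) ∧ (∀ p : Fin N, (p : ℕ) + 1 = N → w p = 1) ∧
    ∀ p q : Fin N, (q : ℕ) = p + 1 → (p : ℕ) % 2 = 1 → w q ≠ w p

/-- For even `N`: the decks reachable from the alternating deck by a shuffle that cuts it into
two packets of odd size. -/
def IsOddCutRiffle {N : ℕ} (w : Fin N → Fin 2) : Prop :=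
  ∀ p q : Fin N, (q : ℕ) = p + 1 → (p : ℕ) % 2 = 0 → w q ≠ w p

instance {N : ℕ} : DecidablePred (IsEvenCutRiffle (N := N)) :=
  fun _ => inferInstanceAs (Decidable (_ ∧ _))

instance {N : ℕ} : DecidablePred (IsOddCutRiffle (N := N)) :=
  fun _ => inferInstanceAs (Decidable (∀ _, _))

section EvenLength

variable {n : ℕ}

theorem matches_zero_iff (hn : 0 < n) {w y : Fin (2 * n) → Fin 2} :
    y ⟨2 * n - 1, by omega⟩ = 0 ∧ Matches w y 0 ↔
      IsEvenCutRiffle w ∧ ∀ p : Fin (2 * n), (p : ℕ) % 2 = 1 → y p = 1 + w p := by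
  constructor
  · rintro ⟨hlast, hM⟩
    have hodd : ∀ p : Fin (2 * n), (p : ℕ) % 2 = 1 → w p = 1 + y p := fun p hp => by
      simpa [hp] using hM p
    have heven : ∀ p : Fin (2 * n), (p : ℕ) % 2 = 0 → w p = prevOrZero y p := fun p hp => by
      simpa [hp] using hM p
    refine ⟨⟨fun p hp => ?_, fun p hp => ?_, fun p q hq hp => ?_⟩, fun p hp => ?_⟩
    · rw [heven p (by omega), prevOrZero_of_val_eq_zero hp]
    · have hp' : p = ⟨2 * n - 1, by omega⟩ := Fin.ext (by simp only; omega)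
      rw [hodd p (by omega), hp', hlast]
      rfl
    · rw [heven q (by omega), prevOrZero_of_val_eq_succ hq, hodd p hp]
      omega
    · have := hodd p hp
      omega
  · rintro ⟨⟨hzero, hlast, halt⟩, hpin⟩
    refine ⟨?_, fun p => ?_⟩
    · rw [hpin _ (by simp only; omega), hlast _ (by simp only; omega)]
      rfl
    · split_ifs with hp
      · by_cases hp0 : (p : ℕ) = 0
        · rw [prevOrZero_of_val_eq_zero hp0, hzero p hp0]
        · have hq : (p : ℕ) = (⟨p - 1, by omega⟩ : Fin (2 * n)) + 1 := by simp only; omega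
          have := halt _ p hq (by simp only; omega)
          rw [prevOrZero_of_val_eq_succ hq, hpin _ (by simp only; omega)]
          omega
      · rw [hpin p (by simpa using hp)]
        omega

theorem matches_one_iff (hn : 0 < n) {w y : Fin (2 * n) → Fin 2} :
    y ⟨2 * n - 1, by omega⟩ = 1 ∧ Matches w y 1 ↔
      IsOddCutRiffle w ∧ y ⟨2 * n - 1, by omega⟩ = 1 ∧
        ∀ p : Fin (2 * n), (p : ℕ) % 2 = 0 → y p = 1 + w p := by
  constructor
  · rintro ⟨hlast, hM⟩
    have hodd : ∀ p : Fin (2 * n), (p : ℕ) % 2 = 1 → w p = prevOrZero y p := fun p hp => by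
      simpa [hp] using hM p
    have heven : ∀ p : Fin (2 * n), (p : ℕ) % 2 = 0 → w p = 1 + y p := fun p hp => by
      simpa [hp] using hM p
    refine ⟨fun p q hq hp => ?_, hlast, fun p hp => ?_⟩
    · rw [hodd q (by omega), prevOrZero_of_val_eq_succ hq, heven p hp]
      omega
    · have := heven p hp
      omega
  · rintro ⟨halt, hlast, hpin⟩
    refine ⟨hlast, fun p => ?_⟩
    split_ifs with hp
    · have hq : (p : ℕ) = (⟨p - 1, by omega⟩ : Fin (2 * n)) + 1 := by simp only; omega
      have := halt _ p hq (by simp only; omega)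
      rw [prevOrZero_of_val_eq_succ hq, hpin _ (by simp only; omega)]
      omega
    · rw [hpin p (by rw [Fin.val_one] at hp; omega)]
      omega

theorem card_filter_matches_zero (hn : 0 < n) (w : Fin (2 * n) → Fin 2) :
    #{y : Fin (2 * n) → Fin 2 | y ⟨2 * n - 1, by omega⟩ = 0 ∧ Matches w y 0} =
      if IsEvenCutRiffle w then 2 ^ n else 0 := by
  split_ifs with hw
  · calc _ = #{y : Fin (2 * n) → Fin 2 |
          ∀ p ∉ ({p | (p : ℕ) % 2 = 0} : Finset (Fin (2 * n))), y p = 1 + w p} := by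
          congr 1; ext y
          simp only [mem_filter, mem_univ, true_and, matches_zero_iff hn, hw, Nat.mod_two_ne_zero]
      _ = 2 ^ n := by
          rw [card_filter_forall_notMem_eq_pow, Fintype.card_fin,
            card_filter_val_mod_two_eq n (by norm_num)]
  · rw [card_eq_zero, filter_eq_empty_iff]
    exact fun y _ h => hw ((matches_zero_iff hn).1 h).1

theorem card_filter_matches_one (hn : 0 < n) (w : Fin (2 * n) → Fin 2) :
    #{y : Fin (2 * n) → Fin 2 | y ⟨2 * n - 1, by omega⟩ = 1 ∧ Matches w y 1} =
      if IsOddCutRiffle w then 2 ^ (n - 1) else 0 := by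
  set F : Finset (Fin (2 * n)) := ({p | (p : ℕ) % 2 = 1} : Finset (Fin (2 * n))).erase
    ⟨2 * n - 1, by omega⟩
  split_ifs with hw
  · calc _ = #{y : Fin (2 * n) → Fin 2 |
          ∀ p ∉ F, y p = if (p : ℕ) % 2 = 0 then 1 + w p else 1} := by
          congr 1; ext y
          simp only [mem_filter, mem_univ, true_and, matches_one_iff hn, hw, F, mem_erase]
          constructor
          · rintro ⟨hlast, heven⟩ p hp
            split_ifs with hp0
            · exact heven p hp0
            · rw [show p = ⟨2 * n - 1, by omega⟩ from not_not.1 fun h => hp ⟨h, by omega⟩,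
                hlast]
          · intro h
            have hlast := h ⟨2 * n - 1, by omega⟩ (by simp)
            rw [if_neg (by simp only; omega)] at hlast
            refine ⟨hlast, fun p hp => ?_⟩
            simpa [hp] using h p (by omega)
      _ = 2 ^ (n - 1) := by
          rw [card_filter_forall_notMem_eq_pow, Fintype.card_fin,
            card_erase_of_mem (mem_filter.2 ⟨mem_univ _, by simp only; omega⟩),
            card_filter_val_mod_two_eq n (by norm_num)]
  · rw [card_eq_zero, filter_eq_empty_iff]
    exact fun y _ h => hw ((matches_one_iff hn).1 h).1

theorem card_filter_matches (hn : 0 < n) (w : Fin (2 * n) → Fin 2) :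
    #{y : Fin (2 * n) → Fin 2 | Matches w y (y ⟨2 * n - 1, by omega⟩)} =
      (if IsEvenCutRiffle w then 2 ^ n else 0) + if IsOddCutRiffle w then 2 ^ (n - 1) else 0 := by
  rw [← card_filter_matches_zero hn, ← card_filter_matches_one hn, ← card_union_of_disjoint]
  · congr 1; ext y
    simp only [mem_filter, mem_univ, true_and, mem_union]
    obtain h | h : y ⟨2 * n - 1, by omega⟩ = 0 ∨ y ⟨2 * n - 1, by omega⟩ = 1 := by omega
    all_goals simp [h]
  · exact disjoint_filter.2 fun y _ h0 h1 => by simp [h0.1] at h1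

theorem card_filter_comp_stableSort_eq (hn : 0 < n)
    {σ : (Fin (2 * n) → Fin 2) → Equiv.Perm (Fin (2 * n))} (hσ : ∀ f, IsStableSort f (σ f))
    {v : Fin (2 * n) → Fin 2} (hv : ∀ p : Fin (2 * n), v p = if (p : ℕ) % 2 = 0 then 0 else 1)
    (w : Fin (2 * n) → Fin 2) :
    #{f | w ∘ σ f = v} =
      (if IsEvenCutRiffle w then 2 ^ n else 0) + if IsOddCutRiffle w then 2 ^ (n - 1) else 0 := by
  rw [← card_filter_matches hn w]
  exact card_equiv (Equiv.ofBijective _ runningParity_injective.bijective_of_finite) fun f => by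
    simp [comp_stableSort_eq_iff_matches (by omega) (hσ f) hv]

end EvenLength

end BinaryDeck

/-- After a single GSR `2`-shuffle of the alternating deck `v = 1 2 1 2 ⋯ 1 2` of `2n`
cards: (a) the chance of returning to `v` is `(2^{n-1} + 2^n)/2^{2n}`; and (b) for every
deck `w` with `n` cards of each label, `2^{2n}·Q_2(w) ∈ {0, 2^{n-1}, 2^n, 2^{n-1}+2^n}`. -/
theorem two_shuffle_alternating_deck (n : ℕ) (hn : 1 ≤ n)
    (σ : (Fin (2 * n) → Fin 2) → Equiv.Perm (Fin (2 * n)))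
    (hσ : ∀ f, IsStableSort f (σ f))
    (v : Fin (2 * n) → Fin 2) (hv : ∀ p : Fin (2 * n), v p = if (p : ℕ) % 2 = 0 then 0 else 1) :
    (((Finset.univ.filter fun f : Fin (2 * n) → Fin 2 => v ∘ σ f = v).card : ℚ)
        / 2 ^ (2 * n) = ((2 ^ (n - 1) + 2 ^ n : ℚ)) / 2 ^ (2 * n))
    ∧ (∀ w : Fin (2 * n) → Fin 2,
        (Finset.univ.filter fun p => w p = 0).card = n →
        (Finset.univ.filter fun p => w p = 1).card = n →
        (2 : ℚ) ^ (2 * n) *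
            (((Finset.univ.filter fun f : Fin (2 * n) → Fin 2 => w ∘ σ f = v).card : ℚ)
              / 2 ^ (2 * n))
          ∈ ({0, 2 ^ (n - 1), 2 ^ n, 2 ^ (n - 1) + 2 ^ n} : Set ℚ)) := by
  have hcount := BinaryDeck.card_filter_comp_stableSort_eq hn hσ hv
  have hv_alt : ∀ p q : Fin (2 * n), (q : ℕ) = p + 1 → v q ≠ v p := by
    intro p q hq
    rw [hv, hv]
    split_ifs <;> omega
  have heven : BinaryDeck.IsEvenCutRiffle v :=
    ⟨fun p hp => by simp [hv, hp], fun p hp => by rw [hv, if_neg (by omega)],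
      fun p q hq _ => hv_alt p q hq⟩
  have hodd : BinaryDeck.IsOddCutRiffle v := fun p q hq _ => hv_alt p q hq
  refine ⟨by rw [hcount, if_pos heven, if_pos hodd]; push_cast; ring, fun w _ _ => ?_⟩
  rw [hcount, mul_div_cancel₀ _ (by positivity)]
  split_ifs <;> simp [add_comm]
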